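/- Let α ∈ ℂ be a nonzero constant. In the algebra of ℂ-linear endomorphisms of ℂ[x], let D be differentiation and X multiplication by x, and define the Dixmier operators L = (D³ + X² + α)² + 2D and M = (D³ + X² + α)³ + 3D⁴ + 3(X² + α)∘D + 3X. Then M and L satisfy the spectral-curve relation M² = L³ − α. -/

import Mathlib

/-! With `T = D³ + X² + α`, the relation `DX = XD + 1` gives `DT = TD + 2X` and `TX = XT + 3D²`,
and `M = T³ + 3TD + 3X`. Normal-ordering words as `X^a T^b D^c` with these three rules turns
`M² + T = L³ + D³ + X²`, that is `M² = L³ - α`, into an identity of free sums. -/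

open Polynomial

noncomputable def Dop : Module.End ℂ (Polynomial ℂ) := Polynomial.derivative

noncomputable def Xop : Module.End ℂ (Polynomial ℂ) := LinearMap.mulLeft ℂ Polynomial.X

section CanonicalCommutationRelation

variable {A : Type*} [Ring A] {D X : A}

theorem mul_mul_eq_of_mul_eq {a b c : A} (h : a * b = c) (y : A) : a * (b * y) = c * y := by
  rw [← mul_assoc, h]

theorem mul_dixmier_eq (hDX : D * X = X * D + 1) {c : A} (hcD : Commute c D) :
    D * (D ^ 3 + X ^ 2 + c) = (D ^ 3 + X ^ 2 + c) * D + 2 • X := by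
  simp only [pow_succ, pow_zero, one_mul, mul_one, mul_add, add_mul, mul_assoc, hcD.eq.symm,
    hDX, mul_mul_eq_of_mul_eq hDX]
  abel

theorem dixmier_mul_eq (hDX : D * X = X * D + 1) {c : A} (hcX : Commute c X) :
    (D ^ 3 + X ^ 2 + c) * X = X * (D ^ 3 + X ^ 2 + c) + 3 • D ^ 2 := by
  simp only [pow_succ, pow_zero, one_mul, mul_one, mul_add, add_mul, mul_assoc, hcX.eq, hDX,
    mul_mul_eq_of_mul_eq hDX]
  abel

theorem dixmier_spectral_identity {T : A} (hDX : D * X = X * D + 1)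
    (hDT : D * T = T * D + 2 • X) (hTX : T * X = X * T + 3 • D ^ 2) :
    (T ^ 3 + 3 • (T * D) + 3 • X) ^ 2 = (T ^ 2 + 2 • D) ^ 3 - (T - D ^ 3 - X ^ 2) := by
  rw [eq_sub_iff_add_eq]
  simp only [pow_succ, pow_zero, one_mul, mul_one, mul_add, add_mul,
    smul_mul_assoc, mul_smul_comm, smul_add, smul_smul, mul_assoc, hDX, hDT, hTX,
    mul_mul_eq_of_mul_eq hDX, mul_mul_eq_of_mul_eq hDT, mul_mul_eq_of_mul_eq hTX]
  abel

theorem dixmier_spectral_curve (hDX : D * X = X * D + 1) {c : A} (hcD : Commute c D)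
    (hcX : Commute c X) :
    ((D ^ 3 + X ^ 2 + c) ^ 3 + 3 • D ^ 4 + 3 • ((X ^ 2 + c) * D) + 3 • X) ^ 2
      = ((D ^ 3 + X ^ 2 + c) ^ 2 + 2 • D) ^ 3 - c := by
  have hM : 3 • D ^ 4 + 3 • ((X ^ 2 + c) * D) = 3 • ((D ^ 3 + X ^ 2 + c) * D) := by
    rw [← smul_add, add_assoc (D ^ 3), add_mul (D ^ 3), pow_succ]
  rw [add_assoc _ (3 • D ^ 4), hM,
    dixmier_spectral_identity hDX (mul_dixmier_eq hDX hcD) (dixmier_mul_eq hDX hcX)]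
  abel

end CanonicalCommutationRelation

theorem Dop_mul_Xop : Dop * Xop = Xop * Dop + 1 := by
  refine LinearMap.ext fun p => ?_
  simp [Dop, Xop, derivative_mul, mul_comm, add_comm]

theorem dixmier_rank3_spectral_curve_general (α : ℂ) :
    letI one : Module.End ℂ (Polynomial ℂ) := 1
    letI L : Module.End ℂ (Polynomial ℂ) :=
      (Dop ^ 3 + Xop ^ 2 + α • one) ^ 2 + 2 • Dop
    letI M : Module.End ℂ (Polynomial ℂ) :=
      (Dop ^ 3 + Xop ^ 2 + α • one) ^ 3 + 3 • (Dop ^ 4)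
        + 3 • ((Xop ^ 2 + α • one) * Dop) + 3 • Xop
    M ^ 2 = L ^ 3 - α • one := by
  have hc (T : Module.End ℂ (Polynomial ℂ)) : Commute (α • 1) T := (Commute.one_left T).smul_left α
  -- At default transparency, matching the `Ring` operations against those `Module.End` inherits
  -- from `LinearMap` unfolds `Dop` and `npowRec`.
  with_reducible_and_instances exact dixmier_spectral_curve Dop_mul_Xop (hc Dop) (hc Xop)

/-- The Dixmier operators `L = (D³ + X² + α)² + 2D` and
`M = (D³ + X² + α)³ + 3D⁴ + 3(X² + α)∘D + 3X` satisfy the spectral-curve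
relation `M² = L³ − α`. -/
theorem dixmier_rank3_spectral_curve (α : ℂ) (hα : α ≠ 0) :
    letI one : Module.End ℂ (Polynomial ℂ) := 1
    letI L : Module.End ℂ (Polynomial ℂ) :=
      (Dop ^ 3 + Xop ^ 2 + α • one) ^ 2 + 2 • Dop
    letI M : Module.End ℂ (Polynomial ℂ) :=
      (Dop ^ 3 + Xop ^ 2 + α • one) ^ 3 + 3 • (Dop ^ 4)
        + 3 • ((Xop ^ 2 + α • one) * Dop) + 3 • Xop
    M ^ 2 = L ^ 3 - α • one :=
  dixmier_rank3_spectral_curve_general α
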